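/- In a DAG G, if i and j are non-adjacent and i is not an ancestor of j, then the parent set pa(G,i) d-separates i and j in G. -/

import Mathlib

universe u

/-- A mixed graph with directed, bidirected and undirected edges. -/
structure MixedGraph (V : Type u) where
  dir : V → V → Prop
  bidir : V → V → Prop
  undir : V → V → Prop
  bidir_symm : ∀ a b, bidir a b → bidir b a
  undir_symm : ∀ a b, undir a b → undir b a

namespace MixedGraph

variable {V : Type u} (G : MixedGraph V)

/-- Adjacency in a mixed graph. -/
def Adj (a b : V) : Prop :=
  G.dir a b ∨ G.dir b a ∨ G.bidir a b ∨ G.undir a b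

/-- The edge between `a` and `b` has an arrowhead at `b`. -/
def ArrowInto (a b : V) : Prop := G.dir a b ∨ G.bidir a b

/-- `b` is a descendant of `a` (equivalently `a` is an ancestor of `b`),
allowing trivial directed paths. -/
def Anc (a b : V) : Prop := Relation.ReflTransGen G.dir a b

/-- `b` is a collider on the consecutive triple `(a, b, c)`. -/
def Collider (a b c : V) : Prop := G.ArrowInto a b ∧ G.ArrowInto c b

/-- `π` is a path from `i` to `j`: a list of distinct vertices with consecutive
vertices adjacent, starting at `i` and ending at `j`. -/
def IsPathBetween (i j : V) (π : List V) : Prop :=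
  π.Nodup ∧ π.Chain' G.Adj ∧ π.head? = some i ∧ π.getLast? = some j

/-- A set `S` blocks a path `π`: some non-collider of `π` is in `S`, or some
collider of `π` has no descendant (including itself) in `S`. -/
def Blocks (S : Set V) (π : List V) : Prop :=
  ∃ a b c, [a, b, c] <:+: π ∧
    ((¬ G.Collider a b c ∧ b ∈ S) ∨
     (G.Collider a b c ∧ ∀ d, G.Anc b d → d ∉ S))

/-- `S` m-separates `i` and `j`: every path between them is blocked by `S`. -/
def MSep (i j : V) (S : Set V) : Prop :=
  ∀ π, G.IsPathBetween i j π → G.Blocks S π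

/-- Ancestral graph: no directed cycles, no almost directed cycles, and no
arrowhead at an endpoint of an undirected edge. -/
def IsAncestral : Prop :=
  (∀ a b, G.dir a b → ¬ G.Anc b a) ∧
  (∀ a b, G.bidir a b → ¬ G.Anc a b) ∧
  (∀ a b, G.undir a b → ∀ c, ¬ G.ArrowInto c b)

/-- A maximal ancestral graph (MAG). -/
def IsMAG : Prop :=
  G.IsAncestral ∧
  ∀ i j : V, i ≠ j → ¬ G.Adj i j →
    ∃ S : Set V, S ⊆ {v | v ≠ i ∧ v ≠ j} ∧ G.MSep i j S

/-- Induced subgraph on a vertex set `A` (keeping the ambient vertex type). -/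
def induce (A : Set V) : MixedGraph V where
  dir a b := a ∈ A ∧ b ∈ A ∧ G.dir a b
  bidir a b := a ∈ A ∧ b ∈ A ∧ G.bidir a b
  undir a b := a ∈ A ∧ b ∈ A ∧ G.undir a b
  bidir_symm := fun a b ⟨ha, hb, h⟩ => ⟨hb, ha, G.bidir_symm _ _ h⟩
  undir_symm := fun a b ⟨ha, hb, h⟩ => ⟨hb, ha, G.undir_symm _ _ h⟩

/-- `V_γ(i,j)`: vertices lying on some path between `i` and `j` of length
(number of edges) at most `γ`. -/
def Vγ (γ : ℕ) (i j : V) : Set V :=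
  {v | ∃ π, G.IsPathBetween i j π ∧ π.length ≤ γ + 1 ∧ v ∈ π}

/-- The γ-local graph `G_γ(i,j)`: the subgraph induced by `V_γ(i,j)`. -/
def localGraph (γ : ℕ) (i j : V) : MixedGraph V :=
  G.induce (G.Vγ γ i j)

/-- A γ-local-graph separator of `(i,j)`: a subset of `V_γ(i,j) \ {i,j}`
m-separating `i` and `j` in the γ-local graph. -/
def IsLocalSep (γ : ℕ) (i j : V) (S : Set V) : Prop :=
  S ⊆ G.Vγ γ i j \ {i, j} ∧ (G.localGraph γ i j).MSep i j S

/-- The (η,γ)-local path property: between any two non-adjacent nodes there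
are at most η paths of length at most γ. -/
def LocalPathProp (η γ : ℕ) : Prop :=
  ∀ i j : V, i ≠ j → ¬ G.Adj i j →
    {π : List V | G.IsPathBetween i j π ∧ π.length ≤ γ + 1}.ncard ≤ η

/-- The parents of a vertex. -/
def pa (v : V) : Set V := {u | G.dir u v}

/-- All non-endpoint vertices of `π` are colliders on `π`. -/
def ColliderPathList (π : List V) : Prop :=
  ∀ a b c, [a, b, c] <:+: π → G.Collider a b c

end MixedGraph

/-- The mixed graph of a directed graph. -/
def MixedGraph.ofDir {V : Type u} (E : V → V → Prop) : MixedGraph V where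
  dir := E
  bidir _ _ := False
  undir _ _ := False
  bidir_symm := fun _ _ h => h.elim
  undir_symm := fun _ _ h => h.elim

/-- A directed graph is acyclic. -/
def Acyclic {V : Type u} (E : V → V → Prop) : Prop :=
  ∀ v, ¬ Relation.TransGen E v v

/-!
Take a path `i, w, …, j`. If it starts with `w → i`, then `w` is a non-collider in `pa i`.
Otherwise it starts with `i → w`. Since `i` is not an ancestor of `j`, the path cannot keep
going forward along directed edges all the way to `j`, so at some point an edge points
backwards, and this gives a collider `b` that descends from `i`. Because the graph is
acyclic, no descendant of `b` can be a parent of `i`.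
-/

namespace MixedGraph

variable {V : Type u} {E : V → V → Prop}

lemma ofDir_adj_iff {a b : V} : (ofDir E).Adj a b ↔ E a b ∨ E b a := by
  simp [Adj, ofDir]

lemma ofDir_collider_iff {a b c : V} : (ofDir E).Collider a b c ↔ E a b ∧ E c b := by
  simp [Collider, ArrowInto, ofDir]

lemma not_mem_pa_of_transGen_of_anc (hacyc : Acyclic E) {i b d : V}
    (hib : Relation.TransGen E i b) (hbd : (ofDir E).Anc b d) : d ∉ (ofDir E).pa i :=
  fun hdi => hacyc i ((hib.trans_left hbd).tail hdi)

lemma exists_collider_of_transGen {i j p u : V} (hanc : ¬ (ofDir E).Anc i j) (l : List V)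
    (hpu : E p u) (hiu : Relation.TransGen E i u)
    (hchain : (p :: u :: l).IsChain (ofDir E).Adj) (hlast : (p :: u :: l).getLast? = some j) :
    ∃ a b c, [a, b, c] <:+: p :: u :: l ∧ (ofDir E).Collider a b c ∧
      Relation.TransGen E i b := by
  induction l generalizing p u with
  | nil =>
    obtain rfl : u = j := by simpa using hlast
    exact absurd hiu.to_reflTransGen hanc
  | cons v l ih =>
    have hchain := (List.isChain_cons_cons.mp hchain).2
    rcases ofDir_adj_iff.mp (List.isChain_cons_cons.mp hchain).1 with huv | hvu
    · obtain ⟨a, b, c, hsub, hcol, hib⟩ := ih huv (hiu.tail huv) hchain (by simpa using hlast)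
      exact ⟨a, b, c, List.infix_cons hsub, hcol, hib⟩
    · exact ⟨p, u, v, ⟨[], l, rfl⟩, ofDir_collider_iff.mpr ⟨hpu, hvu⟩, hiu⟩

end MixedGraph

theorem stmt12_general {V : Type u} (E : V → V → Prop) (hacyc : Acyclic E)
    (i j : V) (hadj : ¬ (MixedGraph.ofDir E).Adj i j)
    (hanc : ¬ (MixedGraph.ofDir E).Anc i j) :
    (MixedGraph.ofDir E).MSep i j ((MixedGraph.ofDir E).pa i) := by
  rintro π ⟨-, hchain, hhead, hlast⟩
  obtain ⟨w, l, rfl⟩ : ∃ w l, π = i :: w :: l := by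
    obtain ⟨_ | ⟨w, l⟩, rfl⟩ := List.head?_eq_some_iff.mp hhead
    · obtain rfl : i = j := by simpa using hlast
      exact absurd .refl hanc
    · exact ⟨w, l, rfl⟩
  rcases MixedGraph.ofDir_adj_iff.mp (List.isChain_cons_cons.mp hchain).1 with hiw | hwi
  · obtain ⟨a, b, c, hsub, hcol, hib⟩ :=
      MixedGraph.exists_collider_of_transGen hanc l hiw (.single hiw) hchain hlast
    exact ⟨a, b, c, hsub,
      .inr ⟨hcol, fun _ hbd => MixedGraph.not_mem_pa_of_transGen_of_anc hacyc hib hbd⟩⟩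
  · obtain ⟨v, l, rfl⟩ : ∃ v l₀, l = v :: l₀ := by
      obtain _ | ⟨v, l⟩ := l
      · obtain rfl : w = j := by simpa using hlast
        exact (hadj (MixedGraph.ofDir_adj_iff.mpr (.inr hwi))).elim
      · exact ⟨v, l, rfl⟩
    have hnc : ¬ (MixedGraph.ofDir E).Collider i w v :=
      fun h => hacyc i (.head (MixedGraph.ofDir_collider_iff.mp h).1 (.single hwi))
    exact ⟨i, w, v, ⟨[], l, rfl⟩, .inl ⟨hnc, hwi⟩⟩

/-- In a DAG, if i and j are non-adjacent and i is not an ancestor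
of j, then the parent set of i d-separates i and j. -/
theorem stmt12 {V : Type u} (E : V → V → Prop) (hacyc : Acyclic E)
    (i j : V) (hij : i ≠ j) (hadj : ¬ (MixedGraph.ofDir E).Adj i j)
    (hanc : ¬ (MixedGraph.ofDir E).Anc i j) :
    (MixedGraph.ofDir E).MSep i j ((MixedGraph.ofDir E).pa i) :=
  stmt12_general E hacyc i j hadj hanc
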